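/- arXiv:1606.02592 — 6 statements merged into one kernel-verified Lean document; each statement's English description precedes it below -/
import Mathlib

section
/- Let N ≥ 1 and let M be a real N×N matrix that is diagonalizable over ℂ. Suppose M has a real eigenvalue λ with λ > 1 that is algebraically simple and strictly dominant (every complex eigenvalue μ of M with μ ≠ λ satisfies |μ| < λ), and suppose there is a real eigenvector w of M for λ all of whose components have the same strict sign (w_l · w_q > 0 for all l, q). Then the set U^{-∞}(M) has positive Lebesgue measure. -/
open Matrix MeasureTheory Filter Set

noncomputable section

/-- `U^{-∞}(M)`: points of the open negative orthant all of whose iterates under `M`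
tend to `-∞` in every coordinate. -/
def UnegInf {N : ℕ} (M : Matrix (Fin N) (Fin N) ℝ) : Set (Fin N → ℝ) :=
  {y | (∀ i, y i < 0) ∧ ∀ i, Tendsto (fun k : ℕ => ((M ^ k) *ᵥ y) i) atTop atBot}

/-- `μ ∈ ℂ` is an eigenvalue of the real matrix `M` regarded as a complex matrix. -/
def IsCEigenvalue {N : ℕ} (M : Matrix (Fin N) (Fin N) ℝ) (μ : ℂ) : Prop :=
  ∃ v : Fin N → ℂ, v ≠ 0 ∧ (M.map Complex.ofReal) *ᵥ v = μ • v

/-- `M` is diagonalizable over `ℂ`: `ℂ^N` has a basis of eigenvectors of `M`. -/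
def DiagonalizableOverC {N : ℕ} (M : Matrix (Fin N) (Fin N) ℝ) : Prop :=
  ∃ b : Module.Basis (Fin N) ℂ (Fin N → ℂ), ∀ i, ∃ μ : ℂ,
    (M.map Complex.ofReal) *ᵥ (b i) = μ • (b i)

/-!
Diagonalize `M` over `ℂ`. Since every other eigenvalue is smaller than `λ` in modulus,
`λ⁻ᵏ Mᵏ y` converges to the projection `P y` of `y` onto the `λ`-eigenspace along the
remaining eigenvectors, so `(Mᵏ y)ⱼ → -∞` as soon as `(P y)ⱼ` has negative real part.
Together with `y < 0` this is an open condition on `y`, and it holds at the eigenvector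
`w` (or `-w`) with negative entries because `P w = w`. So `U^{-∞}(M)` contains a nonempty
open set.
-/

open Topology Complex

namespace Module.Basis

variable {ι : Type*} [Fintype ι]

lemma pow_apply_eq_sum {R V : Type*} [CommSemiring R] [AddCommMonoid V] [Module R V]
    {b : Basis ι R V} {μ : ι → R} {f : Module.End R V} (hb : ∀ i, f (b i) = μ i • b i)
    (k : ℕ) (u : V) :
    (f ^ k) u = ∑ i, (μ i ^ k * b.repr u i) • b i := by
  have hpow (i : ι) : (f ^ k) (b i) = μ i ^ k • b i := by
    induction k with
    | zero => simp
    | succ k ih => rw [pow_succ', Module.End.mul_apply, ih, map_smul, hb, smul_smul, pow_succ]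
  conv_lhs => rw [← b.sum_repr u]
  simp only [map_sum, map_smul, hpow, smul_smul, mul_comm]

variable {𝕜 V : Type*} [NormedField 𝕜] [DecidableEq 𝕜] [AddCommGroup V] [Module 𝕜 V]

/-- For an eigenbasis `b` with eigenvalues `μ`, the projection onto the `lam`-eigenspace along the
other eigenvectors. -/
def eigenProj (b : Basis ι 𝕜 V) (μ : ι → 𝕜) (lam : 𝕜) : V →ₗ[𝕜] V :=
  ∑ i with μ i = lam, (b.coord i).smulRight (b i)

lemma eigenProj_apply (b : Basis ι 𝕜 V) (μ : ι → 𝕜) (lam : 𝕜) (u : V) :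
    b.eigenProj μ lam u = ∑ i with μ i = lam, b.repr u i • b i := by
  simp [eigenProj]

lemma tendsto_inv_pow_smul_pow_apply [TopologicalSpace V] [IsTopologicalAddGroup V]
    [ContinuousSMul 𝕜 V] {b : Basis ι 𝕜 V} {μ : ι → 𝕜} {f : Module.End 𝕜 V}
    (hb : ∀ i, f (b i) = μ i • b i) {lam : 𝕜} (hlam : lam ≠ 0)
    (hdom : ∀ i, μ i ≠ lam → ‖μ i‖ < ‖lam‖) (u : V) :
    Tendsto (fun k : ℕ => (lam ^ k)⁻¹ • (f ^ k) u) atTop (𝓝 (b.eigenProj μ lam u)) := by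
  have hratio (i : ι) : Tendsto (fun k : ℕ => (μ i / lam) ^ k) atTop
      (𝓝 (if μ i = lam then 1 else 0)) := by
    split_ifs with h
    · simp [h, hlam]
    · refine tendsto_pow_atTop_nhds_zero_of_norm_lt_one ?_
      rw [norm_div, div_lt_one (norm_pos_iff.mpr hlam)]
      exact hdom i h
  have hterm (k : ℕ) :
      (lam ^ k)⁻¹ • (f ^ k) u = ∑ i, ((μ i / lam) ^ k * b.repr u i) • b i := by
    rw [pow_apply_eq_sum hb, Finset.smul_sum]
    refine Finset.sum_congr rfl fun i _ => ?_
    rw [smul_smul, div_pow, div_eq_inv_mul, mul_assoc]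
  simp only [hterm, eigenProj_apply, Finset.sum_filter]
  refine tendsto_finsetSum _ fun i _ => ?_
  convert ((hratio i).mul_const (b.repr u i)).smul_const (b i) using 2
  split_ifs <;> simp

end Module.Basis

section RealMatrix

variable {n ι : Type*} [Fintype n] [DecidableEq n] [Fintype ι]

lemma ofReal_comp_pow_mulVec (M : Matrix n n ℝ) (k : ℕ) (y : n → ℝ) :
    ofReal ∘ (M ^ k *ᵥ y) = M.map ofReal ^ k *ᵥ (ofReal ∘ y) := by
  ext i
  exact (RingHom.map_mulVec ofRealHom (M ^ k) y i).trans (by rw [Matrix.map_pow]; rfl)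

lemma pow_mulVec_of_mulVec_eq_smul {M : Matrix n n ℝ} {lam : ℝ} {w : n → ℝ}
    (hw : M *ᵥ w = lam • w) (k : ℕ) : M ^ k *ᵥ w = lam ^ k • w := by
  induction k with
  | zero => simp
  | succ k ih => rw [pow_succ', ← mulVec_mulVec, ih, mulVec_smul, hw, smul_smul, pow_succ]

variable {M : Matrix n n ℝ} {b : Module.Basis ι ℂ (n → ℂ)} {μ : ι → ℂ}
  (hb : ∀ i, M.map ofReal *ᵥ b i = μ i • b i) {lam : ℝ}
  (hdom : ∀ i, μ i ≠ lam → ‖μ i‖ < lam)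
include hb hdom

lemma tendsto_inv_pow_smul_ofReal_pow_mulVec (hlam : 0 < lam) (y : n → ℝ) :
    Tendsto (fun k : ℕ => ((lam : ℂ) ^ k)⁻¹ • (ofReal ∘ (M ^ k *ᵥ y))) atTop
      (𝓝 (b.eigenProj μ lam (ofReal ∘ y))) := by
  have hf : ∀ i, toLin' (M.map ofReal) (b i) = μ i • b i := by simpa using hb
  simpa [ofReal_comp_pow_mulVec, ← toLin'_pow] using
    Module.Basis.tendsto_inv_pow_smul_pow_apply (lam := (lam : ℂ)) hf
      (by exact_mod_cast hlam.ne') (by simpa [abs_of_pos hlam] using hdom) (ofReal ∘ y)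

lemma eigenProj_ofReal_of_mulVec_eq_smul (hlam : 0 < lam) {w : n → ℝ}
    (hw : M *ᵥ w = lam • w) : b.eigenProj μ lam (ofReal ∘ w) = ofReal ∘ w := by
  -- `P w` is the limit of the constant sequence `λ⁻ᵏ Mᵏ w = w`.
  refine tendsto_nhds_unique (tendsto_inv_pow_smul_ofReal_pow_mulVec hb hdom hlam w) ?_
  refine tendsto_const_nhds.congr fun k => ?_
  ext i
  simp [pow_mulVec_of_mulVec_eq_smul hw, hlam.ne']

lemma tendsto_pow_mulVec_apply_atBot (hlam : 1 < lam) {y : n → ℝ} {j : n}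
    (hy : (b.eigenProj μ lam (ofReal ∘ y) j).re < 0) :
    Tendsto (fun k : ℕ => (M ^ k *ᵥ y) j) atTop atBot := by
  have hlim : Tendsto (fun k : ℕ => (lam ^ k)⁻¹ * (M ^ k *ᵥ y) j) atTop
      (𝓝 (b.eigenProj μ lam (ofReal ∘ y) j).re) := by
    have := ((continuous_re.comp (continuous_apply j)).tendsto _).comp
      (tendsto_inv_pow_smul_ofReal_pow_mulVec hb hdom (by linarith) y)
    simpa [Function.comp_def, ← ofReal_pow, ← ofReal_inv] using this
  have hpos (k : ℕ) : lam ^ k ≠ 0 := pow_ne_zero k (by linarith)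
  simpa [hpos] using (tendsto_pow_atTop_atTop_of_one_lt hlam).atTop_mul_neg hy hlim

end RealMatrix

lemma volume_unegInf_pos_of_eigenvector_neg {N : ℕ} {M : Matrix (Fin N) (Fin N) ℝ}
    {b : Module.Basis (Fin N) ℂ (Fin N → ℂ)} {μ : Fin N → ℂ}
    (hb : ∀ i, M.map ofReal *ᵥ b i = μ i • b i) {lam : ℝ}
    (hdom : ∀ i, μ i ≠ lam → ‖μ i‖ < lam) (hlam : 1 < lam) {w : Fin N → ℝ}
    (hw : M *ᵥ w = lam • w) (hneg : ∀ l, w l < 0) : 0 < volume (UnegInf M) := by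
  set U := {y : Fin N → ℝ |
    (∀ i, y i < 0) ∧ ∀ j, (b.eigenProj μ lam (ofReal ∘ y) j).re < 0}
  have hU : IsOpen U := by
    have hP : Continuous fun y : Fin N → ℝ => b.eigenProj μ lam (ofReal ∘ y) :=
      (LinearMap.continuous_of_finiteDimensional _).comp (by fun_prop)
    simp only [U, ofPred_and, ofPred_forall]
    exact (isOpen_iInter_of_finite fun i => isOpen_lt (by fun_prop) continuous_const).inter
      (isOpen_iInter_of_finite fun j => isOpen_lt (by fun_prop) continuous_const)
  have hwU : w ∈ U := ⟨hneg, fun j => by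
    simpa [eigenProj_ofReal_of_mulVec_eq_smul hb hdom (by linarith) hw] using hneg j⟩
  have hUsub : U ⊆ UnegInf M := fun y hy =>
    ⟨hy.1, fun j => tendsto_pow_mulVec_apply_atBot hb hdom hlam (hy.2 j)⟩
  exact (hU.measure_pos volume ⟨w, hwU⟩).trans_le (measure_mono hUsub)

lemma forall_neg_or_forall_pos_of_mul_pos {ι : Type*} {w : ι → ℝ}
    (hsign : ∀ l q, 0 < w l * w q) : (∀ l, w l < 0) ∨ ∀ l, 0 < w l := by
  by_contra! ⟨⟨l, hl⟩, ⟨q, hq⟩⟩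
  exact (hsign l q).not_ge (mul_nonpos_of_nonneg_of_nonpos hl hq)

theorem stmt0_general {N : ℕ} (M : Matrix (Fin N) (Fin N) ℝ)
    (hdiag : DiagonalizableOverC M)
    (lam : ℝ) (hlam : 1 < lam)
    (hdom : ∀ μ : ℂ, IsCEigenvalue M μ → μ ≠ (lam : ℂ) → ‖μ‖ < lam)
    (w : Fin N → ℝ) (hw : M *ᵥ w = lam • w)
    (hsign : ∀ l q : Fin N, 0 < w l * w q) :
    0 < volume (UnegInf M) := by
  obtain ⟨b, hb⟩ := hdiag
  choose μ hμ using hb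
  have hdom' (i : Fin N) (hi : μ i ≠ lam) : ‖μ i‖ < lam :=
    hdom _ ⟨b i, b.ne_zero i, hμ i⟩ hi
  rcases forall_neg_or_forall_pos_of_mul_pos hsign with hneg | hpos
  · exact volume_unegInf_pos_of_eigenvector_neg hμ hdom' hlam hw hneg
  · refine volume_unegInf_pos_of_eigenvector_neg hμ hdom' hlam (w := -w) ?_ (by simpa using hpos)
    rw [mulVec_neg, hw, smul_neg]

/-- Sufficiency part of Lemma 3.5: a real, simple, strictly dominant eigenvalue `λ > 1`
with an eigenvector whose components all have the same strict sign forces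
`U^{-∞}(M)` to have positive Lebesgue measure. -/
theorem stmt0 {N : ℕ} (hN : 1 ≤ N) (M : Matrix (Fin N) (Fin N) ℝ)
    (hdiag : DiagonalizableOverC M)
    (lam : ℝ) (hlam : 1 < lam)
    (hsimple : Polynomial.rootMultiplicity (lam : ℂ) (M.map Complex.ofReal).charpoly = 1)
    (hdom : ∀ μ : ℂ, IsCEigenvalue M μ → μ ≠ (lam : ℂ) → ‖μ‖ < lam)
    (w : Fin N → ℝ) (hw : M *ᵥ w = lam • w)
    (hsign : ∀ l q : Fin N, 0 < w l * w q) :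
    0 < volume (UnegInf M) :=
  stmt0_general M hdiag lam hlam hdom w hw hsign
end
end

section
/- Let m ≥ 1 and let M_1, …, M_m be real N×N matrices with nonnegative entries, each of which is invertible. Suppose the full cyclic product M^{(1)} = M_m M_{m-1} ⋯ M_1 is diagonalizable over ℂ and has a real eigenvalue λ > 1 that is algebraically simple and strictly dominant (|μ| < λ for every complex eigenvalue μ ≠ λ), with a right eigenvector all of whose components are nonzero and a left eigenvector all of whose components are nonzero. Then for every y ∈ ℝ^N with all components strictly negative, for every l ∈ {1, …, m} and every integer k ≥ 0, all components of M_{(l,1)} (M^{(1)})^k y are strictly negative, and for every l ∈ {1, …, m} and every coordinate i, the i-th component of M_{(l,1)} (M^{(1)})^k y tends to -∞ as k → ∞. -/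
/-!
Write `A = M^{(1)}`. Because `λ` is a simple, strictly dominant eigenvalue of the
diagonalisable matrix `A`, the normalised iterates `λ⁻ᵏ Aᵏ x` converge to the component of `x`
along the `λ`-eigenline, i.e. to a real multiple of `w`. For `x = e_j` these iterates are
nonnegative while their pairing with `v` stays equal to `v_j ≠ 0`, so the limit is a nonzero
nonnegative multiple of `w`: the entries of `w` all have the same sign (the Perron–Frobenius
picture). Hence there is an eigenvector `u` with negative entries, and `y ≤ c u` for some `c > 0`.
Nonnegative matrices are monotone, so `M_{(l,1)} Aᵏ y ≤ c λᵏ M_{(l,1)} u`, and `M_{(l,1)} u` is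
negative because a nonnegative invertible matrix has a positive entry in every row.
-/

open Matrix MeasureTheory Filter Set

noncomputable section

/-- Cyclic product of `d` of the matrices `M_j, M_{j+1}, …` (indices mod `m`),
with `M_j` applied first (i.e. `M_{j+d-1} ⋯ M_{j+1} M_j`). -/
def cycProd {N m : ℕ} (M : Fin m → Matrix (Fin N) (Fin N) ℝ) (j : Fin m) (d : ℕ) :
    Matrix (Fin N) (Fin N) ℝ :=
  (List.range d).foldl
    (fun A i => M ⟨(j.val + i) % m, Nat.mod_lt _ (lt_of_le_of_lt (Nat.zero_le _) j.isLt)⟩ * A) 1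

/-- The full return matrix `M^{(j)} = M_{j-1}⋯M_{j+1}M_j` (all `m` matrices in cyclic
order, `M_j` applied first). -/
def Mfull {N m : ℕ} (M : Fin m → Matrix (Fin N) (Fin N) ℝ) (j : Fin m) :
    Matrix (Fin N) (Fin N) ℝ :=
  cycProd M j m

/-- The partial-turn matrix `M_{(l,j)} = M_l ⋯ M_j` in cyclic order (`M_j` applied
first, wrapping around if `l < j`); for `l = j` it is just `M_j`. -/
def Mpartial {N m : ℕ} (M : Fin m → Matrix (Fin N) (Fin N) ℝ) (l j : Fin m) :
    Matrix (Fin N) (Fin N) ℝ :=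
  cycProd M j ((l.val + m - j.val) % m + 1)

/-- The cyclic successor `q + 1 (mod m)` of an index `q`. -/
def finSucc {m : ℕ} (q : Fin m) : Fin m :=
  ⟨(q.val + 1) % m, Nat.mod_lt _ (lt_of_le_of_lt (Nat.zero_le _) q.isLt)⟩

theorem Polynomial.rootMultiplicity_prod_X_sub_C {n K : Type*} [Fintype n] [Field K]
    [DecidableEq K] (μ : n → K) (a : K) :
    rootMultiplicity a (∏ i, (X - C (μ i))) = (Finset.univ.filter (μ · = a)).card := by
  have hroots : (∏ i, (X - C (μ i))).roots = Finset.univ.val.map μ := by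
    simpa [Multiset.map_map, Function.comp_def] using
      roots_multiset_prod_X_sub_C (Finset.univ.val.map μ)
  rw [← count_roots, hroots, Multiset.count_map]
  simp [eq_comm, Finset.card, Finset.filter_val]

namespace Matrix

variable {n : Type*} [Fintype n] [DecidableEq n]

section Nonneg

variable {R : Type*} [CommRing R] [LinearOrder R] [IsStrictOrderedRing R] {A : Matrix n n R}

variable (n R) in
def nonnegSubmonoid : Submonoid (Matrix n n R) where
  carrier := {A | ∀ i j, 0 ≤ A i j}
  one_mem' i j := by
    rw [one_apply]
    split_ifs <;> simp
  mul_mem' hA hB i j := Finset.sum_nonneg fun k _ => mul_nonneg (hA i k) (hB k j)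

omit [DecidableEq n] in
theorem mulVec_mono_of_nonneg (hA : ∀ i j, 0 ≤ A i j) {x y : n → R} (hxy : x ≤ y) :
    A *ᵥ x ≤ A *ᵥ y :=
  fun i => Finset.sum_le_sum fun j _ => mul_le_mul_of_nonneg_left (hxy j) (hA i j)

theorem exists_pos_of_nonneg_of_isUnit (hA : ∀ i j, 0 ≤ A i j) (hU : IsUnit A) (i : n) :
    ∃ j, 0 < A i j := by
  by_contra! h
  have hdet := det_eq_zero_of_row_eq_zero i fun j => le_antisymm (h j) (hA i j)
  exact not_isUnit_zero (hdet ▸ (isUnit_iff_isUnit_det A).mp hU)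

theorem mulVec_neg_of_nonneg_of_isUnit (hA : ∀ i j, 0 ≤ A i j) (hU : IsUnit A) {x : n → R}
    (hx : ∀ j, x j < 0) (i : n) : (A *ᵥ x) i < 0 := by
  obtain ⟨j, hj⟩ := exists_pos_of_nonneg_of_isUnit hA hU i
  exact Finset.sum_neg' (fun k _ => mul_nonpos_of_nonneg_of_nonpos (hA i k) (hx k).le)
    ⟨j, Finset.mem_univ j, mul_neg_of_pos_of_neg hj (hx j)⟩

end Nonneg

theorem pow_mulVec_of_mulVec_eq_smul {R : Type*} [CommSemiring R] {A : Matrix n n R} {c : R}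
    {w : n → R} (hw : A *ᵥ w = c • w) (k : ℕ) : A ^ k *ᵥ w = c ^ k • w := by
  induction k with
  | zero => simp
  | succ k ih => rw [pow_succ', ← mulVec_mulVec, ih, mulVec_smul, hw, smul_smul, ← pow_succ]

open Polynomial in
theorem charpoly_eq_prod_of_eigenbasis {K : Type*} [Field K] {B : Matrix n n K}
    (b : Module.Basis n K (n → K)) {μ : n → K} (hμ : ∀ i, B *ᵥ b i = μ i • b i) :
    B.charpoly = ∏ i, (X - C (μ i)) := by
  have hdiag : LinearMap.toMatrix b b B.toLin' = diagonal μ := by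
    ext i j
    rw [LinearMap.toMatrix_apply, toLin'_apply, hμ j, map_smul, b.repr_self, diagonal_apply]
    split_ifs with h <;> simp [h]
  rw [← charpoly_toLin', ← LinearMap.charpoly_toMatrix _ b, hdiag, charpoly_diagonal]

open Polynomial in
theorem existsUnique_eigenvalue_eq_of_rootMultiplicity_charpoly_eq_one {K : Type*} [Field K]
    {B : Matrix n n K} (b : Module.Basis n K (n → K)) {μ : n → K}
    (hμ : ∀ i, B *ᵥ b i = μ i • b i) {a : K} (ha : rootMultiplicity a B.charpoly = 1) :
    ∃! i, μ i = a := by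
  classical
  rw [charpoly_eq_prod_of_eigenbasis b hμ, rootMultiplicity_prod_X_sub_C,
    Finset.card_eq_one] at ha
  obtain ⟨i₀, hi₀⟩ := ha
  exact ⟨i₀, by simpa [Finset.eq_singleton_iff_unique_mem] using hi₀⟩

theorem tendsto_inv_pow_smul_pow_mulVec {𝕜 : Type*} [NormedField 𝕜] {B : Matrix n n 𝕜}
    (b : Module.Basis n 𝕜 (n → 𝕜)) {μ : n → 𝕜} (hμ : ∀ i, B *ᵥ b i = μ i • b i) {i₀ : n}
    (h₀ : μ i₀ ≠ 0) (hdom : ∀ i ≠ i₀, ‖μ i‖ < ‖μ i₀‖) (z : n → 𝕜) :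
    Tendsto (fun k : ℕ => (μ i₀ ^ k)⁻¹ • (B ^ k *ᵥ z)) atTop (nhds (b.repr z i₀ • b i₀)) := by
  have hratio : ∀ i, Tendsto (fun k : ℕ => (μ i / μ i₀) ^ k) atTop
      (nhds (if i = i₀ then 1 else 0)) := by
    intro i
    split_ifs with hi
    · simp [hi, h₀]
    · refine tendsto_pow_atTop_nhds_zero_of_norm_lt_one ?_
      rw [norm_div, div_lt_one (norm_pos_iff.2 h₀)]
      exact hdom i hi
  have hexpand : ∀ k : ℕ, (μ i₀ ^ k)⁻¹ • (B ^ k *ᵥ z) =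
      ∑ i, (b.repr z i * (μ i / μ i₀) ^ k) • b i := by
    intro k
    conv_lhs => rw [← b.sum_repr z]
    rw [mulVec_sum, Finset.smul_sum]
    refine Finset.sum_congr rfl fun i _ => ?_
    rw [mulVec_smul, pow_mulVec_of_mulVec_eq_smul (hμ i), smul_smul, smul_smul, div_pow,
      div_eq_mul_inv]
    ring_nf
  simp_rw [hexpand]
  convert tendsto_finsetSum Finset.univ fun i _ =>
    ((hratio i).const_mul (b.repr z i)).smul_const (b i)
  simp

theorem exists_tendsto_inv_pow_smul_pow_mulVec {A : Matrix n n ℝ}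
    (b : Module.Basis n ℂ (n → ℂ)) {μ : n → ℂ}
    (hμ : ∀ i, A.map Complex.ofReal *ᵥ b i = μ i • b i) {i₀ : n} {lam : ℝ} (hlam : 0 < lam)
    (h₀ : μ i₀ = lam) (hdom : ∀ i ≠ i₀, ‖μ i‖ < lam) {w : n → ℝ} (hw : A *ᵥ w = lam • w)
    (hw₀ : w ≠ 0) (x : n → ℝ) :
    ∃ t : ℝ, Tendsto (fun k : ℕ => (lam ^ k)⁻¹ • (A ^ k *ᵥ x)) atTop (nhds (t • w)) := by
  have hcomplex : ∀ (y : n → ℝ) (k : ℕ),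
      (μ i₀ ^ k)⁻¹ • (A.map Complex.ofReal ^ k *ᵥ (Complex.ofReal ∘ y)) =
        Complex.ofReal ∘ ((lam ^ k)⁻¹ • (A ^ k *ᵥ y)) := by
    intro y k
    ext i
    have hpow : (A ^ k).map Complex.ofReal = A.map Complex.ofReal ^ k :=
      map_pow Complex.ofRealHom.mapMatrix A k
    have hcast :
        ((A ^ k *ᵥ y) i : ℂ) = ((A ^ k).map Complex.ofReal *ᵥ (Complex.ofReal ∘ y)) i :=
      Complex.ofRealHom.map_mulVec (A ^ k) y i
    simp [h₀, ← hpow, hcast]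
  have hlim := tendsto_inv_pow_smul_pow_mulVec b hμ (i₀ := i₀) (by simp [h₀, hlam.ne'])
    (by simpa [h₀, abs_of_pos hlam] using hdom)
  -- the normalised iterates of `w` are constantly `w`, so `w` lies on the line of `b i₀`
  have hwb : Complex.ofReal ∘ w = b.repr (Complex.ofReal ∘ w) i₀ • b i₀ := by
    refine tendsto_nhds_unique ?_ (hlim _)
    simp_rw [hcomplex, pow_mulVec_of_mulVec_eq_smul hw, smul_smul,
      inv_mul_cancel₀ (pow_ne_zero _ hlam.ne'), one_smul]
    exact tendsto_const_nhds
  set d := b.repr (Complex.ofReal ∘ w) i₀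
  have hd : d ≠ 0 := by
    intro h
    apply hw₀
    ext i
    simpa [h] using congrFun hwb i
  have hx := hlim (Complex.ofReal ∘ x)
  set c := b.repr (Complex.ofReal ∘ x) i₀
  refine ⟨(c / d).re, ?_⟩
  rw [← div_mul_cancel₀ c hd, mul_smul, ← hwb] at hx
  simp only [hcomplex] at hx
  rw [tendsto_pi_nhds] at hx ⊢
  intro i
  simpa only [Function.comp_def, Pi.smul_apply, smul_eq_mul, Complex.ofReal_re,
    Complex.re_mul_ofReal] using (Complex.continuous_re.tendsto _).comp (hx i)

theorem exists_neg_eigenvector_of_tendsto {A : Matrix n n ℝ}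
    (hA : A ∈ nonnegSubmonoid n ℝ) {lam : ℝ} (hlam : 0 < lam) {w v : n → ℝ}
    (hw : A *ᵥ w = lam • w) (hwne : ∀ i, w i ≠ 0) (hv : Aᵀ *ᵥ v = lam • v) (hv₀ : v ≠ 0)
    (hlim : ∀ x, ∃ t : ℝ,
      Tendsto (fun k : ℕ => (lam ^ k)⁻¹ • (A ^ k *ᵥ x)) atTop (nhds (t • w))) :
    ∃ u, A *ᵥ u = lam • u ∧ ∀ i, u i < 0 := by
  obtain ⟨j, hj⟩ := Function.ne_iff.mp hv₀
  obtain ⟨t, ht⟩ := hlim (Pi.single j 1)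
  have hnonneg : 0 ≤ t • w := by
    refine ge_of_tendsto ht (Eventually.of_forall fun k => ?_)
    have hAk := mulVec_mono_of_nonneg (pow_mem hA k)
      (Pi.single_nonneg.2 zero_le_one : (0 : n → ℝ) ≤ Pi.single j 1)
    rw [mulVec_zero] at hAk
    exact smul_nonneg (inv_nonneg.2 (pow_nonneg hlam.le k)) hAk
  have hdot : ∀ k : ℕ, v ⬝ᵥ ((lam ^ k)⁻¹ • (A ^ k *ᵥ Pi.single j 1)) = v j := by
    intro k
    rw [dotProduct_smul, dotProduct_mulVec, ← mulVec_transpose, transpose_pow,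
      pow_mulVec_of_mulVec_eq_smul hv, smul_dotProduct, dotProduct_single, smul_eq_mul,
      smul_eq_mul, mul_one, inv_mul_cancel_left₀ (pow_ne_zero _ hlam.ne')]
  have hlimdot : v ⬝ᵥ (t • w) = v j :=
    tendsto_nhds_unique (((continuous_const.dotProduct continuous_id).tendsto _).comp ht)
      (by simp only [Function.comp_def, id, hdot]; exact tendsto_const_nhds)
  have ht₀ : t ≠ 0 := by
    rintro rfl
    exact hj (by simpa using hlimdot.symm)
  refine ⟨(-t) • w, by rw [mulVec_smul, hw, smul_comm], fun i => ?_⟩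
  have hpos := (hnonneg i).lt_of_ne (mul_ne_zero ht₀ (hwne i)).symm
  simp only [Pi.smul_apply, smul_eq_mul, Pi.zero_apply] at hpos ⊢
  linarith

theorem pow_mulVec_le_smul {A : Matrix n n ℝ} (hA : A ∈ nonnegSubmonoid n ℝ) {lam c : ℝ}
    {u y : n → ℝ} (hu : A *ᵥ u = lam • u) (hyu : y ≤ c • u) (k : ℕ) :
    A ^ k *ᵥ y ≤ (c * lam ^ k) • u :=
  calc A ^ k *ᵥ y ≤ A ^ k *ᵥ (c • u) := mulVec_mono_of_nonneg (pow_mem hA k) hyu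
    _ = (c * lam ^ k) • u := by rw [mulVec_smul, pow_mulVec_of_mulVec_eq_smul hu, smul_smul]

end Matrix

theorem exists_pos_le_smul {ι : Type*} [Finite ι] {y : ι → ℝ} (hy : ∀ i, y i < 0)
    (u : ι → ℝ) : ∃ c : ℝ, 0 < c ∧ y ≤ c • u := by
  have h : ∀ i, ∀ᶠ c in nhdsWithin (0 : ℝ) (Ioi 0), y i < c * u i := fun i =>
    nhdsWithin_le_nhds <| ((continuous_id.mul continuous_const).tendsto' 0 0 (zero_mul _))
      |>.eventually (eventually_gt_nhds (hy i))
  obtain ⟨c, hcu, hc⟩ := ((eventually_all.2 h).and self_mem_nhdsWithin).exists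
  exact ⟨c, hc, fun i => (hcu i).le⟩

theorem cycProd_succ {N m : ℕ} (M : Fin m → Matrix (Fin N) (Fin N) ℝ) (j : Fin m) (d : ℕ) :
    cycProd M j (d + 1) =
      M ⟨(j.val + d) % m, Nat.mod_lt _ (lt_of_le_of_lt (Nat.zero_le _) j.isLt)⟩ *
        cycProd M j d := by
  rw [cycProd, List.range_succ, List.foldl_append, List.foldl_cons, List.foldl_nil, cycProd]

theorem cycProd_mem {N m : ℕ} {M : Fin m → Matrix (Fin N) (Fin N) ℝ}
    {S : Submonoid (Matrix (Fin N) (Fin N) ℝ)} (hM : ∀ q, M q ∈ S) (j : Fin m) (d : ℕ) :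
    cycProd M j d ∈ S := by
  induction d with
  | zero => exact S.one_mem
  | succ d ih => rw [cycProd_succ]; exact S.mul_mem (hM _) ih

theorem stmt4_general {N m : ℕ} (hm : 1 ≤ m)
    (M : Fin m → Matrix (Fin N) (Fin N) ℝ)
    (hnonneg : ∀ q i j, 0 ≤ M q i j)
    (hinv : ∀ q, IsUnit (M q))
    (hdiag : DiagonalizableOverC (Mfull M ⟨0, hm⟩))
    (lam : ℝ) (hlam : 1 < lam)
    (hsimple : Polynomial.rootMultiplicity (lam : ℂ)
      ((Mfull M ⟨0, hm⟩).map Complex.ofReal).charpoly = 1)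
    (hdom : ∀ μ : ℂ, IsCEigenvalue (Mfull M ⟨0, hm⟩) μ → μ ≠ (lam : ℂ) →
      ‖μ‖ < lam)
    (w : Fin N → ℝ) (hw : (Mfull M ⟨0, hm⟩) *ᵥ w = lam • w) (hwne : ∀ i, w i ≠ 0)
    (v : Fin N → ℝ) (hv : (Mfull M ⟨0, hm⟩)ᵀ *ᵥ v = lam • v) (hvne : ∀ i, v i ≠ 0) :
    ∀ y : Fin N → ℝ, (∀ i, y i < 0) →
      (∀ l : Fin m, ∀ k : ℕ, ∀ i,
        ((Mpartial M l ⟨0, hm⟩ * (Mfull M ⟨0, hm⟩) ^ k) *ᵥ y) i < 0) ∧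
      (∀ l : Fin m, ∀ i,
        Tendsto (fun k : ℕ => ((Mpartial M l ⟨0, hm⟩ * (Mfull M ⟨0, hm⟩) ^ k) *ᵥ y) i)
          atTop atBot) := by
  intro y hy
  rcases isEmpty_or_nonempty (Fin N) with _ | ⟨⟨j⟩⟩
  · exact ⟨fun _ _ i => isEmptyElim i, fun _ i => isEmptyElim i⟩
  have hMnonneg : ∀ q, M q ∈ nonnegSubmonoid (Fin N) ℝ := hnonneg
  have hA : Mfull M ⟨0, hm⟩ ∈ nonnegSubmonoid (Fin N) ℝ := cycProd_mem hMnonneg _ _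
  obtain ⟨b, hb⟩ := hdiag
  choose μ hμ using hb
  obtain ⟨i₀, hi₀, huniq⟩ :=
    existsUnique_eigenvalue_eq_of_rootMultiplicity_charpoly_eq_one b hμ hsimple
  have hlim := exists_tendsto_inv_pow_smul_pow_mulVec b hμ (by linarith) hi₀
    (fun i hi => hdom _ ⟨b i, b.ne_zero i, hμ i⟩ (mt (huniq i) hi)) hw
    (fun h => hwne j (congrFun h j))
  obtain ⟨u, hAu, hu⟩ := exists_neg_eigenvector_of_tendsto hA (by linarith) hw hwne hv
    (fun h => hvne j (congrFun h j)) hlim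
  obtain ⟨c, hc, hyu⟩ := exists_pos_le_smul hy u
  have hbound : ∀ l k, (Mpartial M l ⟨0, hm⟩ * Mfull M ⟨0, hm⟩ ^ k) *ᵥ y ≤
      (c * lam ^ k) • (Mpartial M l ⟨0, hm⟩ *ᵥ u) := fun l k => by
    rw [← mulVec_mulVec, ← mulVec_smul]
    exact mulVec_mono_of_nonneg (cycProd_mem hMnonneg _ _) (pow_mulVec_le_smul hA hAu hyu k)
  have hPu : ∀ l i, (Mpartial M l ⟨0, hm⟩ *ᵥ u) i < 0 := fun l =>
    mulVec_neg_of_nonneg_of_isUnit (cycProd_mem hMnonneg _ _)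
      (cycProd_mem (S := IsUnit.submonoid _) hinv _ _) hu
  refine ⟨fun l k i => (hbound l k i).trans_lt (mul_neg_of_pos_of_neg (by positivity) (hPu l i)),
    fun l i => tendsto_atBot_mono (hbound l · i) ?_⟩
  exact ((tendsto_pow_atTop_atTop_of_one_lt hlam).const_mul_atTop hc).atTop_mul_const_of_neg
    (hPu l i)

/-- Theorem 3.7(a) at the matrix level: if all the basic transition matrices have
nonnegative entries and the full cyclic product has a simple strictly dominant real
eigenvalue `λ > 1` whose right and left eigenvectors have no zero component, then every
point of the open negative orthant has all partial-turn iterates in the open negative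
orthant and every coordinate of those iterates tends to `-∞`. -/
theorem stmt4 {N m : ℕ} (hm : 1 ≤ m) (hN : 1 ≤ N)
    (M : Fin m → Matrix (Fin N) (Fin N) ℝ)
    (hnonneg : ∀ q i j, 0 ≤ M q i j)
    (hinv : ∀ q, IsUnit (M q))
    (hdiag : DiagonalizableOverC (Mfull M ⟨0, hm⟩))
    (lam : ℝ) (hlam : 1 < lam)
    (hsimple : Polynomial.rootMultiplicity (lam : ℂ)
      ((Mfull M ⟨0, hm⟩).map Complex.ofReal).charpoly = 1)
    (hdom : ∀ μ : ℂ, IsCEigenvalue (Mfull M ⟨0, hm⟩) μ → μ ≠ (lam : ℂ) →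
      ‖μ‖ < lam)
    (w : Fin N → ℝ) (hw : (Mfull M ⟨0, hm⟩) *ᵥ w = lam • w) (hwne : ∀ i, w i ≠ 0)
    (v : Fin N → ℝ) (hv : (Mfull M ⟨0, hm⟩)ᵀ *ᵥ v = lam • v) (hvne : ∀ i, v i ≠ 0) :
    ∀ y : Fin N → ℝ, (∀ i, y i < 0) →
      (∀ l : Fin m, ∀ k : ℕ, ∀ i,
        ((Mpartial M l ⟨0, hm⟩ * (Mfull M ⟨0, hm⟩) ^ k) *ᵥ y) i < 0) ∧
      (∀ l : Fin m, ∀ i,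
        Tendsto (fun k : ℕ => ((Mpartial M l ⟨0, hm⟩ * (Mfull M ⟨0, hm⟩) ^ k) *ᵥ y) i)
          atTop atBot) :=
  stmt4_general hm M hnonneg hinv hdiag lam hlam hsimple hdom w hw hwne v hv hvne
end
end

section
/- Let N ≥ 1 and let α ∈ ℝ^N satisfy ∑_{i=1}^N α_i < 0. For ε ∈ (0,1) let Σ(ε) := ℓ({ x ∈ ℝ^N : 0 < |x_i| < ε for all i and ∏_{i=1}^N |x_i|^{α_i} < 1 }) / (2ε)^N. Then lim_{ε → 0⁺} ln(1 − Σ(ε)) / ln(ε) = 0. -/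
open MeasureTheory Filter Set

noncomputable section

lemma aux_prod_lb {N : ℕ} (α : Fin N → ℝ) {ε : ℝ} (hε : 0 < ε) (x : Fin N → ℝ)
    (hx : ∀ i, ε / 2 < |x i| ∧ |x i| < ε) :
    Real.exp (Real.log ε * (∑ i, α i) + Real.log 2 * (-∑ i, |α i|))
      ≤ ∏ i, |x i| ^ α i := by
  have h2 : (0:ℝ) < 2 := by norm_num
  have key : ∀ i ∈ Finset.univ, ε ^ α i * (2:ℝ) ^ (-|α i|) ≤ |x i| ^ α i := by
    intro i _
    obtain ⟨h1, h2'⟩ := hx i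
    have hxpos : 0 < |x i| := lt_trans (by positivity) h1
    rcases le_or_gt 0 (α i) with ha | ha
    · have : (ε / 2) ^ α i ≤ |x i| ^ α i :=
        Real.rpow_le_rpow (by positivity) h1.le ha
      calc ε ^ α i * (2:ℝ) ^ (-|α i|) = (ε / 2) ^ α i := by
            rw [abs_of_nonneg ha, Real.div_rpow hε.le h2.le, Real.rpow_neg h2.le,
              div_eq_mul_inv]
        _ ≤ |x i| ^ α i := this
    · have hle : ε ^ α i ≤ |x i| ^ α i :=
        Real.rpow_le_rpow_of_nonpos hxpos h2'.le ha.le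
      have h21 : (2:ℝ) ^ (-|α i|) ≤ 1 :=
        Real.rpow_le_one_of_one_le_of_nonpos (by norm_num) (neg_nonpos.mpr (abs_nonneg _))
      have hεα : 0 < ε ^ α i := Real.rpow_pos_of_pos hε _
      nlinarith
  have hprod := Finset.prod_le_prod (s := Finset.univ)
    (f := fun i => ε ^ α i * (2:ℝ) ^ (-|α i|)) (g := fun i => |x i| ^ α i)
    (fun i _ => by positivity) key
  refine le_trans (le_of_eq ?_) hprod
  rw [show Real.log ε * (∑ i, α i) + Real.log 2 * (-∑ i, |α i|)
      = ∑ i, (Real.log ε * α i + Real.log 2 * (-|α i|)) by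
    rw [Finset.sum_add_distrib, ← Finset.mul_sum, ← Finset.sum_neg_distrib,
      ← Finset.mul_sum]]
  rw [Real.exp_sum]
  refine Finset.prod_congr rfl fun i _ => ?_
  rw [Real.exp_add, ← Real.rpow_def_of_pos hε, ← Real.rpow_def_of_pos h2]

/-- The core measure estimate: for small `ε > 0` the proportion is at most `1 - 2⁻ᴺ`. -/
lemma aux_measure_bound {N : ℕ} (α : Fin N → ℝ) (hsum : (∑ i, α i) < 0)
    {ε : ℝ} (hε0 : 0 < ε)
    (hεδ : ε ≤ Real.exp ((∑ i, |α i|) * Real.log 2 / (∑ i, α i))) :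
    (volume {x : Fin N → ℝ |
        (∀ i, 0 < |x i| ∧ |x i| < ε) ∧ (∏ i, |x i| ^ α i) < 1}).toReal / (2 * ε) ^ N
      ≤ 1 - (2:ℝ)⁻¹ ^ N := by
  set s := ∑ i, α i with hs
  set C := ∑ i, |α i| with hC
  have hCnn : 0 ≤ C := Finset.sum_nonneg fun i _ => abs_nonneg _
  set S := {x : Fin N → ℝ | (∀ i, 0 < |x i| ∧ |x i| < ε) ∧ (∏ i, |x i| ^ α i) < 1} with hSdef
  set A := Set.pi (univ : Set (Fin N)) (fun _ => Ioo (-ε) (-(ε/2)) ∪ Ioo (ε/2) ε) with hAdef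
  set Q := Set.pi (univ : Set (Fin N)) (fun _ => Ioo (-ε) ε) with hQdef
  have hAabs : ∀ x ∈ A, ∀ i, ε / 2 < |x i| ∧ |x i| < ε := by
    intro x hx i
    rcases hx i (mem_univ i) with h | h
    · obtain ⟨ha, hb⟩ := h
      rw [abs_of_neg (by linarith)]
      constructor <;> linarith
    · obtain ⟨ha, hb⟩ := h
      rw [abs_of_pos (by linarith)]
      exact ⟨ha, hb⟩
  have hdisj : Disjoint S A := by
    rw [Set.disjoint_left]
    intro x hxS hxA
    have h1 : (1:ℝ) ≤ ∏ i, |x i| ^ α i := by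
      refine le_trans ?_ (aux_prod_lb α hε0 x (hAabs x hxA))
      rw [← Real.exp_zero]
      apply Real.exp_le_exp.mpr
      have hlog : Real.log ε ≤ C * Real.log 2 / s :=
        (Real.log_le_iff_le_exp hε0).mpr hεδ
      have hs0 : s ≠ 0 := ne_of_lt hsum
      have hmul := mul_le_mul_of_nonpos_right hlog hsum.le
      rw [div_mul_cancel₀ _ hs0] at hmul
      nlinarith
    exact absurd hxS.2 (not_lt.mpr h1)
  have hAmeas : MeasurableSet A :=
    MeasurableSet.univ_pi fun i => (measurableSet_Ioo.union measurableSet_Ioo)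
  have hSQ : S ⊆ Q := fun x hx i _ => abs_lt.mp (hx.1 i).2
  have hAQ : A ⊆ Q := fun x hx i _ => abs_lt.mp (hAabs x hx i).2
  have hQvol : volume Q = ENNReal.ofReal (2 * ε) ^ N := by
    rw [hQdef, volume_pi_pi]
    simp only [Real.volume_Ioo, Finset.prod_const, Finset.card_univ, Fintype.card_fin]
    congr 1
    ring
  have hAvol : volume A = ENNReal.ofReal ε ^ N := by
    rw [hAdef, volume_pi_pi]
    have hdis : Disjoint (Ioo (-ε) (-(ε/2))) (Ioo (ε/2) ε) :=
      Set.Ioo_disjoint_Ioo.mpr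
        (le_trans (min_le_left _ _) (le_trans (by linarith) (le_max_right (-ε) (ε/2))))
    rw [show ∀ B : Set ℝ, (∏ _i : Fin N, volume B) = volume B ^ N from
      fun B => by rw [Finset.prod_const, Finset.card_univ, Fintype.card_fin]]
    rw [measure_union hdis measurableSet_Ioo, Real.volume_Ioo, Real.volume_Ioo,
      ← ENNReal.ofReal_add (by linarith) (by linarith)]
    congr 2
    ring
  have hsum' : volume S + volume A ≤ volume Q := by
    rw [← measure_union hdisj hAmeas]
    exact measure_mono (union_subset hSQ hAQ)
  have hQfin : volume Q ≠ ⊤ := by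
    rw [hQvol]; exact ENNReal.pow_ne_top ENNReal.ofReal_ne_top
  have hSfin : volume S ≠ ⊤ :=
    ne_top_of_le_ne_top hQfin (le_trans le_self_add hsum')
  have hAfin : volume A ≠ ⊤ := by
    rw [hAvol]; exact ENNReal.pow_ne_top ENNReal.ofReal_ne_top
  have hreal : (volume S).toReal + ε ^ N ≤ (2 * ε) ^ N := by
    have h := ENNReal.toReal_mono hQfin hsum'
    rw [ENNReal.toReal_add hSfin hAfin, hAvol, hQvol, ENNReal.toReal_pow,
      ENNReal.toReal_pow, ENNReal.toReal_ofReal hε0.le,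
      ENNReal.toReal_ofReal (by linarith)] at h
    exact h
  have h2εpos : (0:ℝ) < (2 * ε) ^ N := by positivity
  rw [div_le_iff₀ h2εpos]
  have hcc : (2:ℝ)⁻¹ ^ N * 2 ^ N = 1 := by
    rw [← mul_pow]; norm_num
  have heq : (1 - (2:ℝ)⁻¹ ^ N) * (2 * ε) ^ N = (2 * ε) ^ N - ε ^ N := by
    rw [mul_pow 2 ε]
    linear_combination (-(ε ^ N) : ℝ) * hcc
  linarith

/-- The case `∑ α < 0` of Lemma 3.12: the proportion `Σ(ε)` of the cube `{|x_i| < ε}`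
occupied by `{∏ |x_i|^{α_i} < 1}` satisfies `ln(1 - Σ(ε))/ln ε → 0` as `ε → 0⁺`. -/
theorem stmt10 {N : ℕ} (hN : 1 ≤ N) (α : Fin N → ℝ)
    (hsum : (∑ i, α i) < 0) :
    Tendsto (fun ε : ℝ =>
        Real.log (1 - (volume {x : Fin N → ℝ |
            (∀ i, 0 < |x i| ∧ |x i| < ε) ∧ (∏ i, |x i| ^ α i) < 1}).toReal / (2 * ε) ^ N)
          / Real.log ε)
      (nhdsWithin 0 (Set.Ioi 0))
      (nhds 0) := by
  set δ : ℝ := min (Real.exp ((∑ i, |α i|) * Real.log 2 / (∑ i, α i))) (1/2) with hδdef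
  have hδpos : 0 < δ := lt_min (Real.exp_pos _) one_half_pos
  have hmem : Ioo (0:ℝ) δ ∈ nhdsWithin (0:ℝ) (Ioi 0) :=
    Ioo_mem_nhdsGT_of_mem ⟨le_refl 0, hδpos⟩
  set c : ℝ := (2:ℝ)⁻¹ ^ N with hcdef
  have hcpos : 0 < c := by positivity
  set f : ℝ → ℝ := fun ε => (volume {x : Fin N → ℝ |
      (∀ i, 0 < |x i| ∧ |x i| < ε) ∧ (∏ i, |x i| ^ α i) < 1}).toReal / (2 * ε) ^ N with hfdef
  have hinv : Tendsto (fun ε : ℝ => (Real.log ε)⁻¹) (nhdsWithin 0 (Ioi 0)) (nhds 0) := by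
    have h1 : Tendsto (fun ε : ℝ => -Real.log ε) (nhdsWithin 0 (Ioi 0)) atTop :=
      tendsto_neg_atBot_atTop.comp Real.tendsto_log_nhdsGT_zero
    have h2 := h1.inv_tendsto_atTop
    have h3 : Tendsto (fun ε : ℝ => -(-Real.log ε)⁻¹) (nhdsWithin 0 (Ioi 0)) (nhds (-0)) :=
      h2.neg
    simpa [inv_neg] using h3
  have hupper : Tendsto (fun ε : ℝ => Real.log c / Real.log ε)
      (nhdsWithin 0 (Ioi 0)) (nhds 0) := by
    have := hinv.const_mul (Real.log c)
    simpa [div_eq_mul_inv] using this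
  refine tendsto_of_tendsto_of_tendsto_of_le_of_le' tendsto_const_nhds hupper ?_ ?_
  · filter_upwards [hmem] with ε hε
    obtain ⟨hε0, hεδ⟩ := hε
    have hb : f ε ≤ 1 - c :=
      aux_measure_bound α hsum hε0 (le_trans hεδ.le (min_le_left _ _))
    have hf0 : 0 ≤ f ε := div_nonneg ENNReal.toReal_nonneg (by positivity)
    have hε1 : ε < 1 := lt_of_lt_of_le hεδ (le_trans (min_le_right _ _) (by norm_num))
    have hlogε : Real.log ε < 0 := Real.log_neg hε0 hε1
    have hnum : Real.log (1 - f ε) ≤ 0 := Real.log_nonpos (by linarith) (by linarith)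
    exact div_nonneg_iff.mpr (Or.inr ⟨hnum, hlogε.le⟩)
  · filter_upwards [hmem] with ε hε
    obtain ⟨hε0, hεδ⟩ := hε
    have hb : f ε ≤ 1 - c :=
      aux_measure_bound α hsum hε0 (le_trans hεδ.le (min_le_left _ _))
    have hε1 : ε < 1 := lt_of_lt_of_le hεδ (le_trans (min_le_right _ _) (by norm_num))
    have hlogε : Real.log ε < 0 := Real.log_neg hε0 hε1
    have hlog : Real.log c ≤ Real.log (1 - f ε) := Real.log_le_log hcpos (by linarith)
    exact (div_le_div_right_of_neg hlogε).mpr hlog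
end
end

section
/- For parameters ε_x, ε_y ∈ (-1,1), consider the 3×3 real matrices M₀ = [[(1-ε_y)/2, 1, 0], [-(1+ε_x)/2, 0, 1], [1, 0, 0]] and M₁ = [[(1-ε_x)/2, 1, 0], [-(1+ε_y)/2, 0, 1], [1, 0, 0]]. Then the following are equivalent: (1) ε_x + ε_y < 0; (2) there exists a real number λ > 1 which is an eigenvalue of M₁M₀, such that every complex eigenvalue μ of M₁M₀ satisfies |μ| ≤ λ, and there exists w ∈ ℝ³ with (M₁M₀) w = λ w and w_i · w_j > 0 for all i, j ∈ {1,2,3}; (3) the same condition as (2) with M₁M₀ replaced by M₀M₁. -/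
/-!
The characteristic polynomial of `M₁ x y * M₀ x y` is `p t = t³ - T t² + S t - 1` with
`T = (xy - 3x - 3y - 3)/4` and `S = (xy + 3x + 3y - 3)/4`, so `p 1 = 3(x + y)/2` and
`p (-1) = -(1 + xy)/2 < 0`. As `T < 1`, `p` has no root `λ > 1` unless `p 1 < 0`. If `p 1 < 0`,
the intermediate value theorem gives a root `λ > 1`, and `p t = (t - λ)(t² + (λ - T) t + λ⁻¹)`;
the quadratic factor is positive at `±1` and has constant term `λ⁻¹ < 1`, so its roots lie in
the open unit disc. The product `M₀ x y * M₁ x y` is `M₁ y x * M₀ y x`.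
-/

open Matrix MeasureTheory Filter Set

noncomputable section

/-- The basic transition matrix `M₀` of the RSP cycle `C₀`. -/
def M₀ (εx εy : ℝ) : Matrix (Fin 3) (Fin 3) ℝ :=
  !![(1 - εy)/2, 1, 0; -(1 + εx)/2, 0, 1; 1, 0, 0]

/-- The basic transition matrix `M₁` of the RSP cycle `C₀`. -/
def M₁ (εx εy : ℝ) : Matrix (Fin 3) (Fin 3) ℝ :=
  !![(1 - εx)/2, 1, 0; -(1 + εy)/2, 0, 1; 1, 0, 0]

/-- Conditions (i)-(iii) of Lemma 3.5 for a real `3 × 3` matrix `A`: there is a real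
eigenvalue `λ > 1` dominating the moduli of all complex eigenvalues, with a real
eigenvector all of whose components have the same strict sign. -/
def GoodCond (A : Matrix (Fin 3) (Fin 3) ℝ) : Prop :=
  ∃ lam : ℝ, 1 < lam ∧ IsCEigenvalue A (lam : ℂ) ∧
    (∀ μ : ℂ, IsCEigenvalue A μ → ‖μ‖ ≤ lam) ∧
    ∃ w : Fin 3 → ℝ, A *ᵥ w = lam • w ∧ ∀ i j : Fin 3, 0 < w i * w j

theorem norm_lt_one_of_quadratic_root {b c : ℝ} (hc : c < 1) (h1 : 0 < 1 + b + c)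
    (hm1 : 0 < 1 - b + c) {μ : ℂ} (hμ : μ ^ 2 + b * μ + c = 0) : ‖μ‖ < 1 := by
  have hre : μ.re ^ 2 - μ.im ^ 2 + b * μ.re + c = 0 := by
    simpa [sq] using congrArg Complex.re hμ
  have him : μ.im * (2 * μ.re + b) = 0 := by
    linear_combination (by simpa [sq] using congrArg Complex.im hμ :
      μ.re * μ.im + μ.im * μ.re + b * μ.im = 0)
  rw [← sq_lt_one_iff₀ (norm_nonneg μ), Complex.sq_norm, Complex.normSq_apply]
  rcases mul_eq_zero.mp him with h | h
  · rw [h] at hre ⊢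
    by_contra! hr
    rcases le_or_gt 0 μ.re with h0 | h0
    · have hr1 : 1 ≤ μ.re := by nlinarith
      nlinarith [mul_pos h1 (by linarith : 0 < μ.re),
        mul_nonneg (by linarith : 0 ≤ μ.re - 1) (by linarith : 0 ≤ μ.re - c)]
    · have hr1 : μ.re ≤ -1 := by nlinarith
      nlinarith [mul_pos hm1 (by linarith : 0 < -μ.re),
        mul_nonneg (by linarith : 0 ≤ -1 - μ.re) (by linarith : 0 ≤ -μ.re - c)]
  · nlinarith

theorem exists_cubic_root_gt_one {T S : ℝ} (h1 : S - T < 0) :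
    ∃ lam, 1 < lam ∧ lam ^ 3 - T * lam ^ 2 + S * lam - 1 = 0 := by
  set t₀ := 2 + |T| + |S|
  have hpos : 0 < t₀ ^ 3 - T * t₀ ^ 2 + S * t₀ - 1 := by
    have hT : t₀ - T ≥ 2 + |S| := by linarith [le_abs_self T]
    have hS : S * t₀ ≥ - |S| * t₀ := by nlinarith [neg_abs_le S]
    nlinarith [abs_nonneg T, abs_nonneg S, mul_le_mul_of_nonneg_left hT (sq_nonneg t₀)]
  have ht₀ : (1 : ℝ) ≤ t₀ := by linarith [abs_nonneg T, abs_nonneg S]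
  obtain ⟨lam, hlam, hroot⟩ := intermediate_value_Ioo ht₀
    (f := fun t => t ^ 3 - T * t ^ 2 + S * t - 1) (by fun_prop) ⟨by linarith, hpos⟩
  exact ⟨lam, hlam.1, hroot⟩

theorem norm_le_of_cubic_root {T S lam : ℝ} (hlam : 1 < lam)
    (hroot : lam ^ 3 - T * lam ^ 2 + S * lam - 1 = 0) (h1 : S - T < 0) (hm1 : -2 - T - S < 0)
    {μ : ℂ} (hμ : μ ^ 3 - T * μ ^ 2 + S * μ - 1 = 0) : ‖μ‖ ≤ lam := by
  have hlam0 : lam ≠ 0 := by positivity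
  have hS : S = lam⁻¹ + T * lam - lam ^ 2 := by field_simp; linear_combination hroot
  subst hS
  have hfactor : (μ - lam) * (μ ^ 2 + ((lam - T : ℝ) : ℂ) * μ + (lam⁻¹ : ℝ)) = 0 := by
    have hinv : (lam : ℂ) * (lam : ℂ)⁻¹ = 1 := mul_inv_cancel₀ (by exact_mod_cast hlam0)
    push_cast at hμ ⊢
    linear_combination hμ - hinv
  rcases mul_eq_zero.mp hfactor with h | h
  · rw [sub_eq_zero.mp h, Complex.norm_real, Real.norm_of_nonneg (by linarith)]
  · refine (norm_lt_one_of_quadratic_root ?_ ?_ ?_ h).le.trans hlam.le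
    · exact inv_lt_one_of_one_lt₀ hlam
    · have : (lam - 1) * (1 + (lam - T) + lam⁻¹) = -(lam⁻¹ + T * lam - lam ^ 2 - T) := by
        field_simp; ring
      exact pos_of_mul_pos_right (this ▸ neg_pos.2 h1) (by linarith)
    · have : (lam + 1) * (1 - (lam - T) + lam⁻¹) = -(-2 - T - (lam⁻¹ + T * lam - lam ^ 2)) := by
        field_simp; ring
      exact pos_of_mul_pos_right (this ▸ neg_pos.2 hm1) (by linarith)

theorem sub_neg_of_cubic_root_gt_one {T S lam : ℝ} (hT : T < 1) (hlam : 1 < lam)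
    (hroot : lam ^ 3 - T * lam ^ 2 + S * lam - 1 = 0) : S - T < 0 := by
  nlinarith [mul_pos (by linarith : 0 < lam - 1) (by linarith : 0 < lam - T)]

theorem isCEigenvalue_of_mulVec_eq_smul {N : ℕ} {M : Matrix (Fin N) (Fin N) ℝ} {v : Fin N → ℝ}
    {c : ℝ} (hv : v ≠ 0) (h : M *ᵥ v = c • v) : IsCEigenvalue M c := by
  refine ⟨fun i => v i, fun h0 => hv (funext fun i => by simpa using congrFun h0 i), ?_⟩
  funext i
  simpa [mulVec, dotProduct] using congrArg Complex.ofReal (congrFun h i)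

theorem IsCEigenvalue.det_sub_eq_zero {N : ℕ} {M : Matrix (Fin N) (Fin N) ℝ} {μ : ℂ}
    (h : IsCEigenvalue M μ) :
    (μ • (1 : Matrix (Fin N) (Fin N) ℂ) - M.map Complex.ofReal).det = 0 := by
  obtain ⟨v, hv, hMv⟩ := h
  refine exists_mulVec_eq_zero_iff.mp ⟨v, hv, ?_⟩
  rw [sub_mulVec, smul_mulVec, one_mulVec, hMv, sub_self]

theorem M₁_mul_M₀ (x y : ℝ) :
    M₁ x y * M₀ x y =
      !![(1 - x) / 2 * ((1 - y) / 2) + -(1 + x) / 2, (1 - x) / 2, 1;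
         -(1 + y) / 2 * ((1 - y) / 2) + 1, -(1 + y) / 2, 0;
         (1 - y) / 2, 1, 0] := by
  simp [M₁, M₀]

theorem M₀_mul_M₁ (x y : ℝ) : M₀ x y * M₁ x y = M₁ y x * M₀ y x := by
  simp [M₀, M₁]

theorem det_smul_one_sub_M₁_mul_M₀ (x y : ℝ) (μ : ℂ) :
    (μ • (1 : Matrix (Fin 3) (Fin 3) ℂ) - (M₁ x y * M₀ x y).map Complex.ofReal).det =
      μ ^ 3 - ((x * y - 3 * x - 3 * y - 3) / 4 : ℝ) * μ ^ 2
        + ((x * y + 3 * x + 3 * y - 3) / 4 : ℝ) * μ - 1 := by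
  rw [M₁_mul_M₀, det_fin_three]
  simp only [Matrix.sub_apply, Matrix.smul_apply, one_apply, map_apply, of_apply, cons_val',
    cons_val_zero, cons_val_one, cons_val, cons_val_fin_one, smul_eq_mul, Fin.isValue,
    Fin.reduceEq, if_true, if_false]
  push_cast
  ring

theorem IsCEigenvalue.M₁_mul_M₀_cubic {x y : ℝ} {μ : ℂ}
    (h : IsCEigenvalue (M₁ x y * M₀ x y) μ) :
    μ ^ 3 - ((x * y - 3 * x - 3 * y - 3) / 4 : ℝ) * μ ^ 2
      + ((x * y + 3 * x + 3 * y - 3) / 4 : ℝ) * μ - 1 = 0 :=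
  det_smul_one_sub_M₁_mul_M₀ x y μ ▸ h.det_sub_eq_zero

-- Solves the last two rows of `(M₁ x y * M₀ x y - λ) w = 0`; the first row is then `p λ = 0`.
def eigenvectorM₁M₀ (y lam : ℝ) : Fin 3 → ℝ :=
  ![lam * (lam + (1 + y) / 2), lam * ((3 + y ^ 2) / 4), (1 - y) / 2 * lam + 1]

theorem M₁_mul_M₀_mulVec_eigenvectorM₁M₀ {x y lam : ℝ}
    (hroot : lam ^ 3 - (x * y - 3 * x - 3 * y - 3) / 4 * lam ^ 2
      + (x * y + 3 * x + 3 * y - 3) / 4 * lam - 1 = 0) :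
    (M₁ x y * M₀ x y) *ᵥ eigenvectorM₁M₀ y lam = lam • eigenvectorM₁M₀ y lam := by
  rw [M₁_mul_M₀]
  ext i
  fin_cases i <;>
    simp only [mulVec, dotProduct, Fin.sum_univ_three, eigenvectorM₁M₀, of_apply, cons_val',
      cons_val_zero, cons_val_one, cons_val, cons_val_fin_one, Pi.smul_apply, smul_eq_mul,
      Fin.isValue, Fin.zero_eta, Fin.mk_one, Fin.reduceFinMk]
  · linear_combination -hroot
  all_goals ring

theorem eigenvectorM₁M₀_pos {y lam : ℝ} (hy : y ∈ Ioo (-1 : ℝ) 1) (hlam : 0 < lam) (i : Fin 3) :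
    0 < eigenvectorM₁M₀ y lam i := by
  obtain ⟨hy1, hy2⟩ := hy
  fin_cases i
  · show 0 < lam * (lam + (1 + y) / 2)
    exact mul_pos hlam (by linarith)
  · show 0 < lam * ((3 + y ^ 2) / 4)
    positivity
  · show 0 < (1 - y) / 2 * lam + 1
    nlinarith

theorem goodCond_M₁_mul_M₀_of_add_neg {x y : ℝ} (hx : x ∈ Ioo (-1 : ℝ) 1)
    (hy : y ∈ Ioo (-1 : ℝ) 1) (hxy : x + y < 0) : GoodCond (M₁ x y * M₀ x y) := by
  obtain ⟨lam, hlam, hroot⟩ := exists_cubic_root_gt_one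
    (T := (x * y - 3 * x - 3 * y - 3) / 4) (S := (x * y + 3 * x + 3 * y - 3) / 4) (by linarith)
  have hw := M₁_mul_M₀_mulVec_eigenvectorM₁M₀ hroot
  have hpos := eigenvectorM₁M₀_pos hy (by linarith : 0 < lam)
  have hdom : ∀ μ : ℂ, IsCEigenvalue (M₁ x y * M₀ x y) μ → ‖μ‖ ≤ lam := fun μ hμ =>
    norm_le_of_cubic_root hlam hroot (by linarith) (by nlinarith [hx.1, hx.2, hy.1, hy.2])
      hμ.M₁_mul_M₀_cubic
  exact ⟨lam, hlam, isCEigenvalue_of_mulVec_eq_smul (fun h => (hpos 0).ne' (congrFun h 0)) hw,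
    hdom, _, hw, fun i j => mul_pos (hpos i) (hpos j)⟩

theorem add_neg_of_goodCond_M₁_mul_M₀ {x y : ℝ} (hx : x ∈ Ioo (-1 : ℝ) 1)
    (hy : y ∈ Ioo (-1 : ℝ) 1) (h : GoodCond (M₁ x y * M₀ x y)) : x + y < 0 := by
  obtain ⟨lam, hlam, hev, -⟩ := h
  have hroot := hev.M₁_mul_M₀_cubic
  norm_cast at hroot
  have := sub_neg_of_cubic_root_gt_one (by nlinarith [hx.1, hx.2, hy.1, hy.2]) hlam hroot
  linarith

/-- For the RSP transition matrices, conditions (i)-(iii) of Lemma 3.5 hold for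
`M₁M₀`, and likewise for `M₀M₁`, if and only if `εx + εy < 0`. -/
theorem stmt11 (εx εy : ℝ) (hx : εx ∈ Set.Ioo (-1 : ℝ) 1) (hy : εy ∈ Set.Ioo (-1 : ℝ) 1) :
    (εx + εy < 0 ↔ GoodCond (M₁ εx εy * M₀ εx εy)) ∧
    (εx + εy < 0 ↔ GoodCond (M₀ εx εy * M₁ εx εy)) := by
  refine ⟨⟨goodCond_M₁_mul_M₀_of_add_neg hx hy, add_neg_of_goodCond_M₁_mul_M₀ hx hy⟩, ?_⟩
  rw [M₀_mul_M₁, add_comm]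
  exact ⟨goodCond_M₁_mul_M₀_of_add_neg hy hx, add_neg_of_goodCond_M₁_mul_M₀ hy hx⟩
end
end

section
/- For parameters ε_x, ε_y ∈ (-1,1) with ε_x + ε_y < 0, consider the 3×3 real matrices M₀ = [[(1-ε_y)/2, 1, 0], [-(1+ε_x)/2, 0, 1], [1, 0, 0]] and M₁ = [[(1-ε_x)/2, 1, 0], [-(1+ε_y)/2, 0, 1], [1, 0, 0]]. Then for every y ∈ ℝ³ with all three components strictly negative, each component of (M₁M₀)^k y tends to -∞ as k → ∞, and each component of (M₀M₁)^k y tends to -∞ as k → ∞. Equivalently, U^{-∞}(M₁M₀) = U^{-∞}(M₀M₁) = { y ∈ ℝ³ : y_i < 0 for i = 1,2,3 }. -/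
open Matrix MeasureTheory Filter Set
open Topology

noncomputable section

/-!
The return matrix `A = M₁ M₀` has determinant `1`, so it satisfies `A³ = t A² - s A + 1` for its
characteristic polynomial `χ(x) = x³ - t x² + s x - 1`. The condition `εx + εy < 0` is exactly
`χ(1) < 0`, so `χ` has a root `ρ > 1`; as also `χ(-1) < 0`, the quadratic factor `χ(x) / (x - ρ)`
satisfies Jury's criterion and its roots lie in the open unit disc. Hence `A^k y / ρ^k` converges,
and its limit `L` is a `ρ`-eigenvector. The `ρ`-eigenline of `A` is spanned by a positive vector
`v`, and a positive left eigenvector `w` gives `w ⬝ᵥ L = w ⬝ᵥ y < 0` for `y` in the negative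
octant, so `L` is a negative multiple of `v` and every coordinate of `A^k y` behaves like
`ρ^k L i → -∞`. Swapping `εx` and `εy` exchanges `M₀` and `M₁`.
-/

lemma exists_roots_norm_lt_one_of_jury {p q : ℝ} (hq : |q| < 1) (hp : |p| < 1 + q) :
    ∃ r₁ r₂ : ℂ, r₁ + r₂ = p ∧ r₁ * r₂ = q ∧ ‖r₁‖ < 1 ∧ ‖r₂‖ < 1 := by
  rw [abs_lt] at hq hp
  rcases le_or_gt (p ^ 2) (4 * q) with hdisc | hdisc
  · set m := Real.sqrt (4 * q - p ^ 2)
    have hm : m ^ 2 = 4 * q - p ^ 2 := Real.sq_sqrt (by linarith)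
    have hnorm : ∀ σ : ℝ, σ ^ 2 = 1 → ‖(⟨p / 2, σ * (m / 2)⟩ : ℂ)‖ < 1 := fun σ hσ => by
      rw [← sq_lt_one_iff₀ (norm_nonneg _), Complex.sq_norm, Complex.normSq_mk]
      nlinarith
    refine ⟨⟨p / 2, 1 * (m / 2)⟩, ⟨p / 2, -1 * (m / 2)⟩, ?_, ?_, hnorm 1 (by norm_num),
      hnorm (-1) (by norm_num)⟩
    · apply Complex.ext <;> simp
    · apply Complex.ext
      · simp only [Complex.mul_re, Complex.ofReal_re]
        nlinarith
      · simp only [Complex.mul_im, Complex.ofReal_im]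
        ring
  · set m := Real.sqrt (p ^ 2 - 4 * q)
    have hm : m ^ 2 = p ^ 2 - 4 * q := Real.sq_sqrt (by linarith)
    have hm₀ : 0 ≤ m := Real.sqrt_nonneg _
    have hlt : m < 2 - p ∧ m < 2 + p := ⟨by nlinarith, by nlinarith⟩
    refine ⟨((p + m) / 2 : ℝ), ((p - m) / 2 : ℝ), by push_cast; ring, ?_, ?_, ?_⟩
    · rw [← Complex.ofReal_mul]; congr 1; nlinarith
    all_goals rw [Complex.norm_real, Real.norm_eq_abs, abs_lt]; constructor <;> linarith

lemma exists_bound_of_recurrence_two {p q : ℝ} (hq : |q| < 1) (hp : |p| < 1 + q)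
    {g : ℕ → ℝ} (hg : ∀ k, g (k + 2) = p * g (k + 1) - q * g k) :
    ∃ C, ∀ k, |g k| ≤ C := by
  obtain ⟨r₁, r₂, hsum, hprod, hr₁, hr₂⟩ := exists_roots_norm_lt_one_of_jury hq hp
  set u : ℕ → ℂ := fun k => g (k + 1) - r₁ * g k
  have hu : ∀ k, ‖u k‖ ≤ ‖u 0‖ := by
    intro k
    induction k with
    | zero => rfl
    | succ k ih =>
      have hstep : u (k + 1) = r₂ * u k := by
        simp only [u, hg k]
        push_cast
        linear_combination (-(g (k + 1) : ℂ)) * hsum + (g k : ℂ) * hprod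
      rw [hstep, norm_mul]
      exact (mul_le_of_le_one_left (norm_nonneg _) hr₂.le).trans ih
  have hgap : 0 < 1 - ‖r₁‖ := by linarith
  set C := |g 0| + ‖u 0‖ / (1 - ‖r₁‖)
  refine ⟨C, fun k => ?_⟩
  induction k with
  | zero => exact le_add_of_nonneg_right (div_nonneg (norm_nonneg _) hgap.le)
  | succ k ih =>
    have hsplit : (g (k + 1) : ℂ) = r₁ * g k + u k := by simp [u]
    have hC : ‖r₁‖ * C + ‖u 0‖ ≤ C := by
      have : ‖u 0‖ = (1 - ‖r₁‖) * (‖u 0‖ / (1 - ‖r₁‖)) := by field_simp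
      nlinarith [abs_nonneg (g 0), norm_nonneg r₁]
    calc |g (k + 1)| = ‖(g (k + 1) : ℂ)‖ := (Complex.norm_real _).symm
      _ ≤ ‖r₁‖ * |g k| + ‖u 0‖ := by
        rw [hsplit]
        refine (norm_add_le _ _).trans (add_le_add ?_ (hu k))
        rw [norm_mul, Complex.norm_real, Real.norm_eq_abs]
      _ ≤ ‖r₁‖ * C + ‖u 0‖ := by gcongr
      _ ≤ C := hC

lemma tendsto_div_pow_of_bounded_sub {f : ℕ → ℝ} {ρ C : ℝ} (hρ : 1 < ρ)
    (hC : ∀ k, |f (k + 1) - ρ * f k| ≤ C) :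
    ∃ L, Tendsto (fun k => f k / ρ ^ k) atTop (𝓝 L) := by
  have hρ₀ : 0 < ρ := by linarith
  set g := fun k => (f (k + 1) - ρ * f k) / ρ ^ (k + 1)
  have hsummable : Summable g := by
    refine Summable.of_norm_bounded (g := fun k => C * ρ⁻¹ * ρ⁻¹ ^ k) ?_ fun k => ?_
    · exact (summable_geometric_of_lt_one (by positivity) (inv_lt_one_of_one_lt₀ hρ)).mul_left _
    · calc ‖g k‖ = |f (k + 1) - ρ * f k| / ρ ^ (k + 1) := by
            rw [Real.norm_eq_abs, abs_div, abs_of_pos (pow_pos hρ₀ _)]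
        _ ≤ C / ρ ^ (k + 1) := by gcongr; exact hC k
        _ = C * ρ⁻¹ * ρ⁻¹ ^ k := by rw [inv_pow, pow_succ]; field_simp
  have htelescope : ∀ k, f k / ρ ^ k = f 0 + ∑ j ∈ Finset.range k, g j := by
    intro k
    induction k with
    | zero => simp
    | succ k ih =>
      rw [Finset.sum_range_succ, ← add_assoc, ← ih]
      simp only [g]
      field_simp
      ring
  exact ⟨_, (tendsto_const_nhds.add hsummable.hasSum.tendsto_sum_nat).congr
    fun k => (htelescope k).symm⟩

lemma tendsto_atBot_of_tendsto_div_pow {f : ℕ → ℝ} {ρ L : ℝ} (hρ : 1 < ρ) (hL : L < 0)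
    (h : Tendsto (fun k => f k / ρ ^ k) atTop (𝓝 L)) : Tendsto f atTop atBot :=
  (h.neg_mul_atTop hL (tendsto_pow_atTop_atTop_of_one_lt hρ)).congr fun k => by
    have : ρ ^ k ≠ 0 := by positivity
    field_simp

lemma exists_root_gt_one_of_cubic {t s : ℝ} (h : s < t) :
    ∃ ρ, 1 < ρ ∧ ρ ^ 3 - t * ρ ^ 2 + s * ρ - 1 = 0 := by
  set X := |t| + |s| + 2
  have hX2 : 2 ≤ X := by simp only [X]; linarith [abs_nonneg t, abs_nonneg s]
  have hX : 0 ≤ X ^ 3 - t * X ^ 2 + s * X - 1 := by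
    nlinarith [le_abs_self t, neg_abs_le s, abs_nonneg t, abs_nonneg s, sq_nonneg X,
      sq_nonneg (X - 1)]
  obtain ⟨ρ, hρ, hroot⟩ := intermediate_value_Icc (a := 1) (b := X) (by linarith)
    (f := fun x => x ^ 3 - t * x ^ 2 + s * x - 1) (by fun_prop) ⟨by linarith, hX⟩
  refine ⟨ρ, hρ.1.lt_of_ne ?_, hroot⟩
  rintro rfl
  simp only at hroot
  linarith

lemma tendsto_div_pow_of_recurrence_three {t s ρ : ℝ} (hρ : 1 < ρ)
    (hroot : ρ ^ 3 - t * ρ ^ 2 + s * ρ - 1 = 0) (hst : s < t) (hts : -2 < t + s) {f : ℕ → ℝ}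
    (hf : ∀ k, f (k + 3) = t * f (k + 2) - s * f (k + 1) + f k) :
    ∃ L, Tendsto (fun k => f k / ρ ^ k) atTop (𝓝 L) := by
  -- `x³ - t x² + s x - 1 = (x - ρ) (x² - p x + q)`, and `g` solves the recurrence of the
  -- quadratic factor
  set p := t - ρ
  obtain ⟨q, hq⟩ : ∃ q, ρ * q = 1 := ⟨ρ⁻¹, mul_inv_cancel₀ (by positivity)⟩
  have hs : s = q + ρ * p := by
    have : ρ * s = ρ * (q + ρ * p) := by linear_combination hroot - hq
    exact mul_left_cancel₀ (by positivity) this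
  have hq₁ : |q| < 1 := by
    rw [abs_lt]; constructor <;> nlinarith
  have hp : |p| < 1 + q := by
    rw [abs_lt]
    constructor <;> nlinarith
  set g := fun k => f (k + 1) - ρ * f k
  obtain ⟨C, hC⟩ := exists_bound_of_recurrence_two hq₁ hp (g := g) fun k => by
    simp only [g]; linear_combination hf k - f (k + 1) * hs - f k * hq
  exact tendsto_div_pow_of_bounded_sub hρ hC

namespace Matrix

variable {n : Type*} [Fintype n] [DecidableEq n] {A : Matrix n n ℝ}

lemma pow_add_three_mulVec {t s : ℝ} (hA : A ^ 3 = t • A ^ 2 - s • A + 1) (y : n → ℝ) (k : ℕ) :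
    A ^ (k + 3) *ᵥ y = t • (A ^ (k + 2) *ᵥ y) - s • (A ^ (k + 1) *ᵥ y) + A ^ k *ᵥ y := by
  rw [pow_add, hA, mul_add, mul_sub, Matrix.mul_smul, Matrix.mul_smul, mul_one, ← pow_add,
    ← pow_succ, add_mulVec, sub_mulVec, smul_mulVec, smul_mulVec]

lemma vecMul_pow_of_vecMul_eq_smul {ρ : ℝ} {w : n → ℝ} (hw : w ᵥ* A = ρ • w) (k : ℕ) :
    w ᵥ* A ^ k = ρ ^ k • w := by
  induction k with
  | zero => simp
  | succ k ih => rw [pow_succ, ← vecMul_vecMul, ih, smul_vecMul, hw, smul_smul, pow_succ]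

variable {ρ : ℝ} {y L : n → ℝ}

lemma mulVec_eq_smul_of_tendsto (hρ : ρ ≠ 0)
    (hL : Tendsto (fun k : ℕ => (ρ ^ k)⁻¹ • (A ^ k *ᵥ y)) atTop (𝓝 L)) : A *ᵥ L = ρ • L := by
  have hcont : Tendsto (fun k : ℕ => A *ᵥ ((ρ ^ k)⁻¹ • (A ^ k *ᵥ y))) atTop (𝓝 (A *ᵥ L)) :=
    ((continuous_const.matrix_mulVec continuous_id).tendsto L).comp hL
  refine tendsto_nhds_unique hcont (((hL.comp (tendsto_add_atTop_nat 1)).const_smul ρ).congr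
    fun k => ?_)
  simp only [Function.comp_apply, mulVec_smul, mulVec_mulVec, ← pow_succ', smul_smul]
  congr 1
  field_simp
  ring

lemma dotProduct_eq_of_tendsto (hρ : ρ ≠ 0) {w : n → ℝ} (hw : w ᵥ* A = ρ • w)
    (hL : Tendsto (fun k : ℕ => (ρ ^ k)⁻¹ • (A ^ k *ᵥ y)) atTop (𝓝 L)) : w ⬝ᵥ L = w ⬝ᵥ y := by
  have hcont : Tendsto (fun k : ℕ => w ⬝ᵥ ((ρ ^ k)⁻¹ • (A ^ k *ᵥ y))) atTop (𝓝 (w ⬝ᵥ L)) :=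
    ((continuous_const.dotProduct continuous_id).tendsto L).comp hL
  refine tendsto_nhds_unique hcont (tendsto_const_nhds.congr fun k => ?_)
  rw [dotProduct_smul, dotProduct_mulVec, vecMul_pow_of_vecMul_eq_smul hw, smul_dotProduct,
    smul_smul, inv_mul_cancel₀ (pow_ne_zero k hρ), one_smul]

theorem tendsto_pow_mulVec_apply_atBot {t s : ℝ} (hA : A ^ 3 = t • A ^ 2 - s • A + 1)
    (hρ : 1 < ρ) (hroot : ρ ^ 3 - t * ρ ^ 2 + s * ρ - 1 = 0) (hst : s < t) (hts : -2 < t + s)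
    {v w : n → ℝ} (hv : ∀ i, 0 < v i) (hw : ∀ i, 0 < w i) (hwA : w ᵥ* A = ρ • w)
    (hline : ∀ L, A *ᵥ L = ρ • L → ∃ c : ℝ, L = c • v) (hy : ∀ i, y i < 0) (i : n) :
    Tendsto (fun k => (A ^ k *ᵥ y) i) atTop atBot := by
  have hρ₀ : ρ ≠ 0 := by positivity
  choose L hL using fun j => tendsto_div_pow_of_recurrence_three hρ hroot hst hts
    (f := fun k => (A ^ k *ᵥ y) j) fun k => by
      simpa using congrFun (pow_add_three_mulVec hA y k) j
  have hlim : Tendsto (fun k : ℕ => (ρ ^ k)⁻¹ • (A ^ k *ᵥ y)) atTop (𝓝 L) :=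
    tendsto_pi_nhds.2 fun j => by
      simpa only [Pi.smul_apply, smul_eq_mul, inv_mul_eq_div] using hL j
  obtain ⟨c, rfl⟩ := hline L (mulVec_eq_smul_of_tendsto hρ₀ hlim)
  have hwy : w ⬝ᵥ y < 0 :=
    Finset.sum_neg (fun j _ => mul_neg_of_pos_of_neg (hw j) (hy j)) ⟨i, Finset.mem_univ i⟩
  have hwv : 0 < w ⬝ᵥ v :=
    Finset.sum_pos (fun j _ => mul_pos (hw j) (hv j)) ⟨i, Finset.mem_univ i⟩
  have hc : c < 0 := by
    have := dotProduct_eq_of_tendsto hρ₀ hwA hlim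
    rw [dotProduct_smul, smul_eq_mul] at this
    nlinarith
  exact tendsto_atBot_of_tendsto_div_pow hρ (mul_neg_of_neg_of_pos hc (hv i)) (hL i)

end Matrix

def returnMatrix (a c : ℝ) : Matrix (Fin 3) (Fin 3) ℝ :=
  !![a * c - (1 - c), c, 1; 1 - (1 - a) * a, -(1 - a), 0; a, 1, 0]

lemma M₁_mul_M₀_s12 (εx εy : ℝ) :
    M₁ εx εy * M₀ εx εy = returnMatrix ((1 - εy) / 2) ((1 - εx) / 2) := by
  rw [M₁, M₀, mul_fin_three, returnMatrix]
  ring_nf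

lemma returnMatrix_pow_three (a c : ℝ) :
    returnMatrix a c ^ 3 = (a * c + a + c - 2) • returnMatrix a c ^ 2
      - ((1 - a) * (1 - c) - a - c) • returnMatrix a c + 1 := by
  rw [pow_three, sq, returnMatrix, mul_fin_three, mul_fin_three, one_fin_three, smul_of, smul_of,
    of_sub_of, of_add_of]
  simp only [smul_cons, Matrix.smul_empty, smul_eq_mul, cons_sub_cons, empty_sub_empty,
    cons_add_cons, empty_add_empty]
  ring_nf

lemma vecMul_returnMatrix {a c ρ : ℝ}
    (hroot : ρ ^ 3 - (a * c + a + c - 2) * ρ ^ 2 + ((1 - a) * (1 - c) - a - c) * ρ - 1 = 0) :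
    ![ρ * (ρ + 1 - a), c * ρ + 1, ρ + 1 - a] ᵥ* returnMatrix a c
      = ρ • ![ρ * (ρ + 1 - a), c * ρ + 1, ρ + 1 - a] := by
  rw [returnMatrix]
  simp only [vecMul_cons, head_cons, tail_cons, smul_cons, Matrix.smul_empty, smul_eq_mul,
    empty_vecMul, add_cons, empty_add_empty, add_zero, vecCons_inj]
  exact ⟨by linear_combination -hroot, by ring, by ring, trivial⟩

lemma returnMatrix_eigenline {a c ρ : ℝ} (hρ : 0 < ρ) (ha : a ≤ 1) {L : Fin 3 → ℝ}
    (hL : returnMatrix a c *ᵥ L = ρ • L) :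
    ∃ d : ℝ, L = d • ![ρ * (ρ + 1 - a), ρ * (1 - (1 - a) * a), a * ρ + 1] := by
  have h₁ := congrFun hL 1
  have h₂ := congrFun hL 2
  simp only [returnMatrix, mulVec, vec3_dotProduct, of_apply, cons_val_zero, cons_val_one,
    cons_val, Pi.smul_apply, smul_eq_mul] at h₁ h₂
  have hρa : ρ + 1 - a ≠ 0 := by linarith
  refine ⟨L 0 / (ρ * (ρ + 1 - a)), ?_⟩
  ext i
  fin_cases i <;>
    simp only [Fin.zero_eta, Fin.mk_one, Fin.reduceFinMk, Fin.isValue, Pi.smul_apply, smul_eq_mul,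
      cons_val_zero, cons_val_one, cons_val] <;>
    field_simp
  · linear_combination -h₁
  · linear_combination -(ρ + 1 - a) * h₂ - h₁

lemma tendsto_returnMatrix_pow_mulVec_apply_atBot {a c : ℝ} (ha₀ : 0 < a) (ha₁ : a < 1)
    (hc₀ : 0 < c) (hc₁ : c < 1) (hac : 1 < a + c) {y : Fin 3 → ℝ} (hy : ∀ i, y i < 0)
    (i : Fin 3) : Tendsto (fun k => (returnMatrix a c ^ k *ᵥ y) i) atTop atBot := by
  obtain ⟨ρ, hρ, hroot⟩ := exists_root_gt_one_of_cubic
    (t := a * c + a + c - 2) (s := (1 - a) * (1 - c) - a - c) (by nlinarith)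
  have hρ₀ : 0 < ρ := by linarith
  have hρa : 0 < ρ + 1 - a := by linarith
  have ha₂ : 0 < 1 - (1 - a) * a := by nlinarith
  refine tendsto_pow_mulVec_apply_atBot (returnMatrix_pow_three a c) hρ hroot (by nlinarith)
    (by nlinarith) (v := ![ρ * (ρ + 1 - a), ρ * (1 - (1 - a) * a), a * ρ + 1]) ?_ ?_
    (vecMul_returnMatrix hroot) (fun L hL => returnMatrix_eigenline hρ₀ ha₁.le hL) hy i
  · intro j
    fin_cases j
    exacts [mul_pos hρ₀ hρa, mul_pos hρ₀ ha₂, add_pos (mul_pos ha₀ hρ₀) one_pos]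
  · intro j
    fin_cases j
    exacts [mul_pos hρ₀ hρa, add_pos (mul_pos hc₀ hρ₀) one_pos, hρa]

lemma unegInf_M₁_mul_M₀ {εx εy : ℝ} (hx : εx ∈ Set.Ioo (-1 : ℝ) 1)
    (hy : εy ∈ Set.Ioo (-1 : ℝ) 1) (hsum : εx + εy < 0) :
    UnegInf (M₁ εx εy * M₀ εx εy) = {y : Fin 3 → ℝ | ∀ i, y i < 0} := by
  obtain ⟨hx₁, hx₂⟩ := hx
  obtain ⟨hy₁, hy₂⟩ := hy
  ext y
  refine ⟨fun h => h.1, fun h => ⟨h, ?_⟩⟩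
  rw [M₁_mul_M₀_s12]
  exact tendsto_returnMatrix_pow_mulVec_apply_atBot (by linarith) (by linarith) (by linarith)
    (by linarith) (by linarith) h

/-- For the RSP transition matrices with `εx + εy < 0`, the sets `U^{-∞}` of the
return matrices `M₁M₀` and `M₀M₁` are the full open negative octant. -/
theorem stmt12 (εx εy : ℝ) (hx : εx ∈ Set.Ioo (-1 : ℝ) 1) (hy : εy ∈ Set.Ioo (-1 : ℝ) 1)
    (hsum : εx + εy < 0) :
    UnegInf (M₁ εx εy * M₀ εx εy) = {y : Fin 3 → ℝ | ∀ i, y i < 0} ∧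
    UnegInf (M₀ εx εy * M₁ εx εy) = {y : Fin 3 → ℝ | ∀ i, y i < 0} :=
  ⟨unegInf_M₁_mul_M₀ hx hy hsum, unegInf_M₁_mul_M₀ hy hx (by linarith)⟩
end
end

section
/- Define f : ℝ³ → [-∞,+∞] by: f(α₁,α₂,α₃) = +∞ if min{α₁,α₂,α₃} ≥ 0; f(α₁,α₂,α₃) = −∞ if max{α₁,α₂,α₃} ≤ 0; f(α₁,α₂,α₃) = 0 if α₁+α₂+α₃ = 0; f(α₁,α₂,α₃) = (α₁+α₂+α₃)/max{α₁,α₂,α₃} if max{α₁,α₂,α₃} > 0 and α₁+α₂+α₃ < 0; and f(α₁,α₂,α₃) = −(α₁+α₂+α₃)/min{α₁,α₂,α₃} if min{α₁,α₂,α₃} < 0 and α₁+α₂+α₃ > 0. Let ε_x, ε_y ∈ (-1,1) with ε_x + ε_y < 0. Then min{ f((1-ε_y)/2, 1, 0), f(-(1+ε_x)/2, 0, 1), f(1, 0, 0), f((-1-3ε_x-ε_y+ε_xε_y)/4, (1-ε_x)/2, 1), f((3+ε_y²)/4, -(1+ε_y)/2, 0) } = min{ (1-ε_x)/(1+ε_x),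 (1-ε_y)²/(2(1+ε_y)) }, a strictly positive real number; and, interchanging ε_x and ε_y, min{ f((1-ε_x)/2, 1, 0), f(-(1+ε_y)/2, 0, 1), f(1, 0, 0), f((-1-3ε_y-ε_x+ε_xε_y)/4, (1-ε_y)/2, 1), f((3+ε_x²)/4, -(1+ε_x)/2, 0) } = min{ (1-ε_y)/(1+ε_y), (1-ε_x)²/(2(1+ε_x)) }, also a strictly positive real number. -/
open Matrix Set

noncomputable section

/-- The explicit stability-index function `F^index` for `N = 3` variables. -/
def F3 (a b c : ℝ) : EReal :=
  if 0 ≤ min a (min b c) then ⊤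
  else if max a (max b c) ≤ 0 then ⊥
  else if a + b + c = 0 then 0
  else if max a (max b c) > 0 ∧ a + b + c < 0 then
    (((a + b + c) / max a (max b c) : ℝ) : EReal)
  else (((-(a + b + c)) / min a (min b c) : ℝ) : EReal)

lemma F3_of_top {a b c : ℝ} (h : 0 ≤ min a (min b c)) : F3 a b c = ⊤ := by
  simp [F3, h]

lemma F3_of_neg {a b c : ℝ} (hm : min a (min b c) < 0) (hs : 0 < a + b + c) :
    F3 a b c = (((-(a + b + c)) / min a (min b c) : ℝ) : EReal) := by
  have h1 : ¬ 0 ≤ min a (min b c) := not_le.2 hm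
  have h2 : ¬ max a (max b c) ≤ 0 := by
    intro h
    have ha : a ≤ 0 := le_trans (le_max_left _ _) h
    have hb : b ≤ 0 := le_trans (le_trans (le_max_left _ _) (le_max_right a _)) h
    have hc : c ≤ 0 := le_trans (le_trans (le_max_right b _) (le_max_right a _)) h
    linarith
  have h3 : a + b + c ≠ 0 := ne_of_gt hs
  have h4 : ¬ (max a (max b c) > 0 ∧ a + b + c < 0) := fun h => absurd hs (not_lt.2 h.2.le)
  simp only [F3, if_neg h1, if_neg h2, if_neg h3, if_neg h4]

lemma key (εx εy : ℝ) (hx : εx ∈ Set.Ioo (-1 : ℝ) 1) (hy : εy ∈ Set.Ioo (-1 : ℝ) 1)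
    (hsum : εx + εy < 0) :
    (min (F3 ((1 - εy)/2) 1 0)
      (min (F3 (-(1 + εx)/2) 0 1)
        (min (F3 1 0 0)
          (min (F3 ((-1 - 3*εx - εy + εx*εy)/4) ((1 - εx)/2) 1)
            (F3 ((3 + εy^2)/4) (-(1 + εy)/2) 0)))))
      = ((min ((1 - εx)/(1 + εx)) ((1 - εy)^2/(2*(1 + εy))) : ℝ) : EReal) ∧
    0 < min ((1 - εx)/(1 + εx)) ((1 - εy)^2/(2*(1 + εy))) := by
  obtain ⟨hx1, hx2⟩ := hx
  obtain ⟨hy1, hy2⟩ := hy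
  have h1x : (0:ℝ) < 1 + εx := by linarith
  have h1y : (0:ℝ) < 1 + εy := by linarith
  -- term 1
  have t1 : F3 ((1 - εy)/2) 1 0 = ⊤ := by
    apply F3_of_top
    rw [le_min_iff, le_min_iff]
    refine ⟨by linarith, by norm_num, le_refl 0⟩
  -- term 3
  have t3 : F3 1 0 0 = ⊤ := by
    apply F3_of_top
    rw [le_min_iff, le_min_iff]
    norm_num
  -- term 2
  have m2 : min (-(1 + εx)/2) (min (0:ℝ) 1) = -(1 + εx)/2 := by
    rw [min_eq_left zero_le_one, min_eq_left (by linarith)]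
  have t2 : F3 (-(1 + εx)/2) 0 1 = (((1 - εx)/(1 + εx) : ℝ) : EReal) := by
    rw [F3_of_neg (by rw [m2]; linarith) (by linarith)]
    congr 1
    rw [m2, div_eq_div_iff (by linarith : -(1 + εx)/2 ≠ 0) (by linarith : (1 + εx) ≠ 0)]
    ring
  -- term 5
  have m5 : min ((3 + εy^2)/4) (min (-(1 + εy)/2) (0:ℝ)) = -(1 + εy)/2 := by
    rw [min_eq_left (show -(1 + εy)/2 ≤ (0:ℝ) by linarith), min_eq_right (by nlinarith)]
  have t5 : F3 ((3 + εy^2)/4) (-(1 + εy)/2) 0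
      = (((1 - εy)^2/(2*(1 + εy)) : ℝ) : EReal) := by
    rw [F3_of_neg (by rw [m5]; linarith) (by nlinarith)]
    congr 1
    rw [m5]
    rw [div_eq_div_iff (by linarith) (by linarith)]
    ring
  -- term 4 : either ⊤ or ≥ term 2
  have t4 : (((1 - εx)/(1 + εx) : ℝ) : EReal)
      ≤ F3 ((-1 - 3*εx - εy + εx*εy)/4) ((1 - εx)/2) 1 := by
    set a : ℝ := (-1 - 3*εx - εy + εx*εy)/4 with ha
    rcases le_or_gt 0 a with h | h
    · rw [F3_of_top (by rw [le_min_iff, le_min_iff]; exact ⟨h, by linarith, by norm_num⟩)]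
      exact le_top
    · have hm : min a (min ((1 - εx)/2) (1:ℝ)) = a := by
        rw [min_eq_left]
        rw [le_min_iff]
        exact ⟨by linarith, by linarith⟩
      have hs : (0:ℝ) < a + (1 - εx)/2 + 1 := by
        rw [ha]; nlinarith
      rw [F3_of_neg (by rw [hm]; linarith) hs]
      rw [EReal.coe_le_coe_iff, hm]
      have hna : (0:ℝ) < -a := by linarith
      rw [show -(a + (1 - εx)/2 + 1) / a = (a + (1 - εx)/2 + 1) / (-a) by
        rw [div_neg, neg_div]]
      rw [div_le_div_iff₀ h1x hna]
      rw [ha] at hna ⊢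
      nlinarith [mul_pos h1x hna, sq_nonneg (εx - εy), sq_nonneg (1 - εx)]
    -- positivity
  have p2 : (0:ℝ) < (1 - εx)/(1 + εx) := div_pos (by linarith) h1x
  have p5 : (0:ℝ) < (1 - εy)^2/(2*(1 + εy)) :=
    div_pos (by nlinarith) (by linarith)
  refine ⟨?_, lt_min p2 p5⟩
  rw [t1, t3, t2, t5, min_eq_right le_top, min_eq_right le_top, ← min_assoc,
    min_eq_left t4, ← EReal.coe_strictMono.monotone.map_min]

/-- Lemma 4.1: values of the local stability indices `σ₀` and `σ₁` of the RSP
cycle `C₀` when `εx + εy < 0`, as minima of `F^index` over the rows of the basic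
transition matrices and of the return matrices; both are strictly positive. -/
theorem stmt13 (εx εy : ℝ) (hx : εx ∈ Set.Ioo (-1 : ℝ) 1) (hy : εy ∈ Set.Ioo (-1 : ℝ) 1)
    (hsum : εx + εy < 0) :
    (min (F3 ((1 - εy)/2) 1 0)
      (min (F3 (-(1 + εx)/2) 0 1)
        (min (F3 1 0 0)
          (min (F3 ((-1 - 3*εx - εy + εx*εy)/4) ((1 - εx)/2) 1)
            (F3 ((3 + εy^2)/4) (-(1 + εy)/2) 0)))))
      = ((min ((1 - εx)/(1 + εx)) ((1 - εy)^2/(2*(1 + εy))) : ℝ) : EReal) ∧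
    0 < min ((1 - εx)/(1 + εx)) ((1 - εy)^2/(2*(1 + εy))) ∧
    (min (F3 ((1 - εx)/2) 1 0)
      (min (F3 (-(1 + εy)/2) 0 1)
        (min (F3 1 0 0)
          (min (F3 ((-1 - 3*εy - εx + εx*εy)/4) ((1 - εy)/2) 1)
            (F3 ((3 + εx^2)/4) (-(1 + εx)/2) 0)))))
      = ((min ((1 - εy)/(1 + εy)) ((1 - εx)^2/(2*(1 + εx))) : ℝ) : EReal) ∧
    0 < min ((1 - εy)/(1 + εy)) ((1 - εx)^2/(2*(1 + εx))) := by
  obtain ⟨e1, p1⟩ := key εx εy hx hy hsum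
  obtain ⟨e2, p2⟩ := key εy εx hy hx (by linarith)
  have heq : εy*εx = εx*εy := mul_comm _ _
  rw [heq] at e2
  exact ⟨e1, p1, e2, p2⟩
end
end
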